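/- Let A ⊆ H be a finite set, and let B be the (finite) Boolean algebra of subsets of ℕ×ℕ generated by the sets a⁻¹(0) and a⁻¹(1) for a ∈ A. Then exactly one atom of B satisfies ‖b‖ = ∞, and for all x, y ∈ H: if for every atom b of B and every ε ∈ {0,1} the sets x⁻¹(ε) ∩ b and y⁻¹(ε) ∩ b have the same cardinality, then there exists g ∈ G with g·a = a for all a ∈ A and g·x = y. -/

import Mathlib

/-!
The atoms of the algebra generated by `A` are the nonempty level sets of `p ↦ (a p)_{a ∈ A}`.
Every level set except the zero one lies in the union of the supports of `A`, which has finite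
norm, while the zero level set contains the complement of that union, so it is the only atom of
infinite norm.

For transitivity, matching the `x`- and `y`-fibres cell by cell yields the permutation on
`supp x ∪ supp y ∪ supp A`, except in the zero cell, where the fibres may be infinite. There we
add an infinite set of finite norm (one point in each row `i`, of weight `2 · 3^{-(i+1)}`) on
which `x`, `y` and `A` vanish: both zero fibres become countably infinite, hence equinumerous, and
the permutation still moves only a set of finite norm.
-/

open scoped ENNReal

/-- The weight of a point `(i,j) ∈ ℕ × ℕ`: `2 · 3^{-(i+1)}`. -/
noncomputable def wt (p : ℕ × ℕ) : ℝ≥0∞ := 2 * ((3 : ℝ≥0∞) ^ (p.1 + 1))⁻¹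

/-- `‖S‖ = Σ_{(i,j) ∈ S} 2 · 3^{-(i+1)} ∈ [0,∞]` for `S ⊆ ℕ × ℕ`. -/
noncomputable def nrmS (S : Set (ℕ × ℕ)) : ℝ≥0∞ := ∑' p, S.indicator wt p

lemma nrmS_mono {S T : Set (ℕ × ℕ)} (h : S ⊆ T) : nrmS S ≤ nrmS T :=
  ENNReal.tsum_le_tsum fun p =>
    Set.indicator_le_indicator_of_subset h (fun _ => by positivity) p

lemma nrmS_union_le (S T : Set (ℕ × ℕ)) : nrmS (S ∪ T) ≤ nrmS S + nrmS T := by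
  rw [nrmS, nrmS, nrmS, ← ENNReal.tsum_add]
  refine ENNReal.tsum_le_tsum fun p => ?_
  by_cases hS : p ∈ S
  · refine le_trans ?_ (le_add_right le_rfl)
    rw [Set.indicator_of_mem (Set.mem_union_left _ hS), Set.indicator_of_mem hS]
  · by_cases hT : p ∈ T
    · refine le_trans ?_ (le_add_left le_rfl)
      rw [Set.indicator_of_mem (Set.mem_union_right _ hT), Set.indicator_of_mem hT]
    · rw [Set.indicator_of_notMem (fun hc => hc.elim hS hT)]
      positivity

lemma nrmS_empty : nrmS ∅ = 0 := by simp [nrmS]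

/-- The support of `z : ℕ × ℕ → ZMod 2`. -/
def suppZ (z : ℕ × ℕ → ZMod 2) : Set (ℕ × ℕ) := {p | z p = 1}

/-- `‖z‖` for `z : ℕ × ℕ → ZMod 2`. -/
noncomputable def nrmZ (z : ℕ × ℕ → ZMod 2) : ℝ≥0∞ := nrmS (suppZ z)

/-- `H = {z : ℕ × ℕ → ZMod 2 | ‖z‖ < ∞}`, as an (additive) subgroup of the product group
`ℕ × ℕ → ZMod 2` with pointwise addition mod 2. -/
noncomputable def Hgrp : AddSubgroup ((ℕ × ℕ) → ZMod 2) where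
  carrier := {z | nrmZ z < ⊤}
  zero_mem' := by
    have h : suppZ 0 = ∅ := by ext p; simp [suppZ]
    simp [nrmZ, h, nrmS_empty]
  add_mem' {z w} hz hw := by
    have hsub : suppZ (z + w) ⊆ suppZ z ∪ suppZ w := by
      intro p hp
      by_contra hc
      simp only [Set.mem_union, suppZ, Set.mem_setOf_eq, not_or] at hc
      have hdi : ∀ x : ZMod 2, x = 0 ∨ x = 1 := by decide
      have hz0 : z p = 0 := (hdi (z p)).resolve_right hc.1
      have hw0 : w p = 0 := (hdi (w p)).resolve_right hc.2
      have hp' : (z + w) p = 1 := hp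
      rw [Pi.add_apply, hz0, hw0] at hp'
      exact absurd hp' (by decide)
    calc nrmZ (z + w) ≤ nrmS (suppZ z ∪ suppZ w) := nrmS_mono hsub
      _ ≤ nrmZ z + nrmZ w := nrmS_union_le _ _
      _ < ⊤ := ENNReal.add_lt_top.2 ⟨hz, hw⟩
  neg_mem' {z} hz := by
    have h : suppZ (-z) = suppZ z := by
      ext p; simp [suppZ, CharTwo.neg_eq]
    simpa [nrmZ, h] using hz
/-- `φ(x) = Σ_i 2 · x i · 3^{-(i+1)}`, the standard map from `2^ℕ` onto the ternary Cantor
set (values of `x` read as `0, 1` in `ℝ`). -/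
noncomputable def phiC (x : ℕ → ZMod 2) : ℝ :=
  ∑' i, 2 * ((x i).val : ℝ) * ((3 : ℝ) ^ (i + 1))⁻¹

/-- The metric on `H`: `d_H(z,w) = Σ_j |φ(z(·,j)) − φ(w(·,j))|`, the `ℓ¹`-distance between
the corresponding points of `C^ℕ ∩ ℓ¹`. -/
noncomputable def dH (z w : ↥Hgrp) : ℝ :=
  ∑' j, |phiC (fun i => (z : (ℕ × ℕ) → ZMod 2) (i, j)) -
          phiC (fun i => (w : (ℕ × ℕ) → ZMod 2) (i, j))|

/-- The support of a permutation `g` of `ℕ × ℕ`. -/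
def suppP (g : Equiv.Perm (ℕ × ℕ)) : Set (ℕ × ℕ) := {p | g p ≠ p}

lemma suppP_inv (g : Equiv.Perm (ℕ × ℕ)) : suppP g⁻¹ = suppP g := by
  ext p
  simp only [suppP, Set.mem_setOf_eq, ne_eq]
  constructor
  · intro h hc
    exact h (by conv_lhs => rw [← hc]; rw [← Equiv.Perm.mul_apply, inv_mul_cancel, Equiv.Perm.one_apply] ; )
  · intro h hc
    exact h (by conv_lhs => rw [← hc]; rw [← Equiv.Perm.mul_apply, mul_inv_cancel, Equiv.Perm.one_apply])

/-- `G = {g ∈ Sym(ℕ × ℕ) | ‖supp g‖ < ∞}`, as a subgroup of the symmetric group of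
`ℕ × ℕ`. -/
noncomputable def Ggrp : Subgroup (Equiv.Perm (ℕ × ℕ)) where
  carrier := {g | nrmS (suppP g) < ⊤}
  one_mem' := by
    have h : suppP 1 = ∅ := by ext p; simp [suppP]
    simp [h, nrmS_empty]
  mul_mem' {f g} hf hg := by
    have hsub : suppP (f * g) ⊆ suppP f ∪ suppP g := by
      intro p hp
      by_contra hc
      simp only [Set.mem_union, suppP, Set.mem_setOf_eq, ne_eq, not_or, not_not] at hc
      exact hp (by simp only [suppP, Set.mem_setOf_eq, Equiv.Perm.mul_apply, hc.2, hc.1] at *)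
    calc nrmS (suppP (f * g)) ≤ nrmS (suppP f ∪ suppP g) := nrmS_mono hsub
      _ ≤ nrmS (suppP f) + nrmS (suppP g) := nrmS_union_le _ _
      _ < ⊤ := ENNReal.add_lt_top.2 ⟨hf, hg⟩
  inv_mem' {g} hg := by simpa [suppP_inv] using hg

/-- The metric on `G`: `d(f,g) = ‖supp (f⁻¹ ∘ g)‖`. -/
noncomputable def dG (f g : ↥Ggrp) : ℝ :=
  (nrmS (suppP ((f : Equiv.Perm (ℕ × ℕ))⁻¹ * (g : Equiv.Perm (ℕ × ℕ))))).toReal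

/-- The action of `G` on `H`: `g • h = h ∘ g⁻¹`. -/
noncomputable def actGH (g : ↥Ggrp) (h : ↥Hgrp) : ↥Hgrp :=
  ⟨fun p => (h : (ℕ × ℕ) → ZMod 2) (((g : Equiv.Perm (ℕ × ℕ)))⁻¹ p), by
    have hsub : suppZ (fun p => (h : (ℕ × ℕ) → ZMod 2) (((g : Equiv.Perm (ℕ × ℕ)))⁻¹ p)) ⊆
        suppZ (h : (ℕ × ℕ) → ZMod 2) ∪ suppP (g : Equiv.Perm (ℕ × ℕ)) := by
      intro p hp
      by_cases hgp : ((g : Equiv.Perm (ℕ × ℕ)))⁻¹ p = p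
      · left
        have : (h : (ℕ × ℕ) → ZMod 2) (((g : Equiv.Perm (ℕ × ℕ)))⁻¹ p) = 1 := hp
        rwa [hgp] at this
      · right
        have : p ∈ suppP ((g : Equiv.Perm (ℕ × ℕ)))⁻¹ := hgp
        rwa [suppP_inv] at this
    show nrmZ _ < ⊤
    calc nrmZ _ ≤ nrmS (suppZ (h : (ℕ × ℕ) → ZMod 2) ∪ suppP (g : Equiv.Perm (ℕ × ℕ))) :=
          nrmS_mono hsub
      _ ≤ nrmZ (h : (ℕ × ℕ) → ZMod 2) + nrmS (suppP (g : Equiv.Perm (ℕ × ℕ))) :=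
          nrmS_union_le _ _
      _ < ⊤ := ENNReal.add_lt_top.2 ⟨h.2, g.2⟩⟩

/-- Membership in the Boolean algebra of subsets of `ℕ × ℕ` generated by a family `S`:
the smallest collection of sets containing `S` and `univ` and closed under complements and
(binary) unions. -/
inductive InBoolAlg (S : Set (Set (ℕ × ℕ))) : Set (ℕ × ℕ) → Prop
  | base {s : Set (ℕ × ℕ)} : s ∈ S → InBoolAlg S s
  | univ : InBoolAlg S Set.univ
  | compl {s : Set (ℕ × ℕ)} : InBoolAlg S s → InBoolAlg S sᶜ
  | union {s t : Set (ℕ × ℕ)} : InBoolAlg S s → InBoolAlg S t → InBoolAlg S (s ∪ t)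

/-- `b` is an atom of the Boolean algebra generated by `S`: a nonempty member all of whose
proper members-subsets are empty. -/
def IsAtomOfAlg (S : Set (Set (ℕ × ℕ))) (b : Set (ℕ × ℕ)) : Prop :=
  InBoolAlg S b ∧ b ≠ ∅ ∧ ∀ c : Set (ℕ × ℕ), InBoolAlg S c → c ⊆ b → c = ∅ ∨ c = b

/-- The generators `{a⁻¹(ε) : a ∈ A, ε ∈ {0,1}}` associated with a finite `A ⊆ H`. -/
def genSets (A : Finset ↥Hgrp) : Set (Set (ℕ × ℕ)) :=
  {s | ∃ a ∈ A, ∃ ε : ZMod 2, s = {p : ℕ × ℕ | (a : (ℕ × ℕ) → ZMod 2) p = ε}}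

open Set

lemma nrmS_union_lt_top {S T : Set (ℕ × ℕ)} (hS : nrmS S < ⊤) (hT : nrmS T < ⊤) :
    nrmS (S ∪ T) < ⊤ :=
  (nrmS_union_le S T).trans_lt (ENNReal.add_lt_top.2 ⟨hS, hT⟩)

lemma nrmS_biUnion_lt_top {ι : Type*} (s : Finset ι) {t : ι → Set (ℕ × ℕ)}
    (ht : ∀ i ∈ s, nrmS (t i) < ⊤) : nrmS (⋃ i ∈ s, t i) < ⊤ := by
  classical
  induction s using Finset.induction_on with
  | empty => simp [nrmS_empty]
  | insert i s _ ih =>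
    rw [Finset.set_biUnion_insert]
    exact nrmS_union_lt_top (ht i (s.mem_insert_self i))
      (ih fun j hj => ht j (Finset.mem_insert_of_mem hj))

lemma nrmS_eq_tsum_subtype (S : Set (ℕ × ℕ)) : nrmS S = ∑' p : S, wt p :=
  (tsum_subtype S wt).symm

/-- All points of a row carry the same weight. -/
lemma nrmS_eq_top_of_infinite_row {S : Set (ℕ × ℕ)} {i : ℕ} (h : {j | (i, j) ∈ S}.Infinite) :
    nrmS S = ⊤ := by
  have : Infinite {j | (i, j) ∈ S} := h.to_subtype
  have hwt : wt (i, 0) ≠ 0 := by simp [wt]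
  refine top_le_iff.1 ?_
  calc ⊤ = ∑' _ : {j | (i, j) ∈ S}, wt (i, 0) := (ENNReal.tsum_const_eq_top_of_ne_zero hwt).symm
    _ ≤ ∑' p : S, wt p :=
      ENNReal.tsum_comp_le_tsum_of_injective (f := fun j : {j | (i, j) ∈ S} => (⟨(i, j), j.2⟩ : S))
        (fun j k hjk => Subtype.ext (congrArg (fun p : S => p.1.2) hjk)) _
    _ = nrmS S := (nrmS_eq_tsum_subtype S).symm

lemma nrmS_univ : nrmS univ = ⊤ :=
  nrmS_eq_top_of_infinite_row (i := 0) (by simpa using infinite_univ)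

lemma finite_row_of_nrmS_lt_top {S : Set (ℕ × ℕ)} (hS : nrmS S < ⊤) (i : ℕ) :
    {j | (i, j) ∈ S}.Finite :=
  not_not.1 fun h => hS.ne (nrmS_eq_top_of_infinite_row h)

/-- One point per row, avoiding `D`: the weights `2 · 3^{-(i+1)}` of distinct rows are summable. -/
lemma exists_infinite_disjoint_nrmS_lt_top {D : Set (ℕ × ℕ)} (hD : nrmS D < ⊤) :
    ∃ E : Set (ℕ × ℕ), E.Infinite ∧ nrmS E < ⊤ ∧ Disjoint D E := by
  have hrow : ∀ i, ∃ j, (i, j) ∉ D := fun i =>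
    (infinite_univ.sdiff (finite_row_of_nrmS_lt_top hD i)).nonempty.imp fun _ hj => hj.2
  choose j hj using hrow
  have hinj : Function.Injective fun i => (i, j i) := fun i k h => (Prod.ext_iff.1 h).1
  refine ⟨range fun i => (i, j i), infinite_range_of_injective hinj, ?_, ?_⟩
  · rw [nrmS_eq_tsum_subtype, tsum_range wt hinj]
    simp only [wt, ENNReal.tsum_mul_left, ENNReal.inv_pow, ENNReal.tsum_geometric_add_one]
    exact ENNReal.mul_lt_top (by simp) <| ENNReal.mul_lt_top (by simp) <|
      ENNReal.inv_lt_top.2 <| tsub_pos_of_lt <| ENNReal.inv_lt_one.2 (by norm_num)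
  · exact disjoint_right.2 (by rintro _ ⟨i, rfl⟩; exact hj i)

lemma notMem_suppZ {z : ℕ × ℕ → ZMod 2} {p : ℕ × ℕ} : p ∉ suppZ z ↔ z p = 0 := by
  simp only [suppZ, mem_ofPred_eq]
  generalize z p = v
  revert v
  decide

namespace InBoolAlg

variable {S : Set (Set (ℕ × ℕ))}

lemma inter {s t : Set (ℕ × ℕ)} (hs : InBoolAlg S s) (ht : InBoolAlg S t) :
    InBoolAlg S (s ∩ t) := by
  simpa using (hs.compl.union ht.compl).compl

lemma biInter {ι : Type*} (I : Finset ι) {t : ι → Set (ℕ × ℕ)} (ht : ∀ i ∈ I, InBoolAlg S (t i)) :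
    InBoolAlg S (⋂ i ∈ I, t i) := by
  classical
  induction I using Finset.induction_on with
  | empty => simpa using InBoolAlg.univ
  | insert i I _ ih =>
    rw [Finset.set_biInter_insert]
    exact (ht i (I.mem_insert_self i)).inter (ih fun j hj => ht j (Finset.mem_insert_of_mem hj))

end InBoolAlg

section Cells

variable (A : Finset ↥Hgrp)

/-- The values of the elements of `A` at a point; the atoms of the algebra generated by
`genSets A` are the nonempty fibres of this map. -/
def profile (p : ℕ × ℕ) : A → ZMod 2 := fun a => (a : (ℕ × ℕ) → ZMod 2) p

def cell (p : ℕ × ℕ) : Set (ℕ × ℕ) := profile A ⁻¹' {profile A p}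

def jointSupp : Set (ℕ × ℕ) := ⋃ a ∈ A, suppZ (a : (ℕ × ℕ) → ZMod 2)

lemma nrmS_jointSupp_lt_top : nrmS (jointSupp A) < ⊤ :=
  nrmS_biUnion_lt_top A fun a _ => a.2

variable {A}

lemma mem_cell {p q : ℕ × ℕ} : q ∈ cell A p ↔ profile A q = profile A p := Iff.rfl

lemma mem_cell_self (p : ℕ × ℕ) : p ∈ cell A p := rfl

lemma profile_eq_zero_iff {p : ℕ × ℕ} : profile A p = 0 ↔ p ∉ jointSupp A := by
  simp [jointSupp, profile, notMem_suppZ, funext_iff]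

lemma InBoolAlg.mem_iff_of_profile_eq {c : Set (ℕ × ℕ)} (hc : InBoolAlg (genSets A) c)
    {p q : ℕ × ℕ} (h : profile A p = profile A q) : p ∈ c ↔ q ∈ c := by
  induction hc with
  | base hs =>
    obtain ⟨a, ha, ε, rfl⟩ := hs
    exact Eq.congr_left (congrFun h ⟨a, ha⟩)
  | univ => simp
  | compl _ ih => exact ih.not
  | union _ _ ih₁ ih₂ => exact or_congr ih₁ ih₂

lemma inBoolAlg_cell (p : ℕ × ℕ) : InBoolAlg (genSets A) (cell A p) := by
  have : cell A p = ⋂ a ∈ A, {q | (a : (ℕ × ℕ) → ZMod 2) q = (a : (ℕ × ℕ) → ZMod 2) p} := by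
    ext q; simp [mem_cell, profile, funext_iff]
  rw [this]
  exact InBoolAlg.biInter A fun a ha => .base ⟨a, ha, _, rfl⟩

lemma isAtomOfAlg_cell (p : ℕ × ℕ) : IsAtomOfAlg (genSets A) (cell A p) := by
  refine ⟨inBoolAlg_cell p, (nonempty_of_mem (mem_cell_self p)).ne_empty, fun c hc hcp => ?_⟩
  refine (eq_empty_or_nonempty c).imp_right fun ⟨q, hq⟩ => hcp.antisymm fun r hr => ?_
  exact (hc.mem_iff_of_profile_eq ((hcp hq).trans hr.symm)).1 hq

lemma IsAtomOfAlg.eq_cell {b : Set (ℕ × ℕ)} (hb : IsAtomOfAlg (genSets A) b) {p : ℕ × ℕ}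
    (hp : p ∈ b) : b = cell A p := by
  obtain ⟨hbA, -, hmin⟩ := hb
  refine subset_antisymm ?_ fun q hq => (hbA.mem_iff_of_profile_eq hq.symm).1 hp
  rcases hmin _ (hbA.inter (inBoolAlg_cell p)) inter_subset_left with h | h
  · exact absurd (h ▸ ⟨hp, mem_cell_self p⟩ : p ∈ (∅ : Set _)) (notMem_empty p)
  · exact h ▸ inter_subset_right

/-- Off `jointSupp A`, whose norm is finite, every point lies in the zero cell. -/
lemma nrmS_cell_eq_top_iff {p : ℕ × ℕ} : nrmS (cell A p) = ⊤ ↔ profile A p = 0 := by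
  constructor
  · intro h
    by_contra hp
    have hsub : cell A p ⊆ jointSupp A := fun q hq =>
      not_not.1 fun hq' => hp (mem_cell.1 hq ▸ profile_eq_zero_iff.2 hq')
    exact ((nrmS_mono hsub).trans_lt (nrmS_jointSupp_lt_top A)).ne h
  · intro hp
    have hcompl : (cell A p)ᶜ ⊆ jointSupp A := fun q hq =>
      not_not.1 fun hq' => hq (mem_cell.2 (hp ▸ profile_eq_zero_iff.2 hq'))
    refine not_not.1 fun h => ?_
    have := nrmS_union_lt_top (lt_top_iff_ne_top.2 h)
      ((nrmS_mono hcompl).trans_lt (nrmS_jointSupp_lt_top A))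
    rw [union_compl_self, nrmS_univ] at this
    exact lt_irrefl _ this

lemma existsUnique_isAtomOfAlg_nrmS_eq_top (A : Finset ↥Hgrp) :
    ∃! b : Set (ℕ × ℕ), IsAtomOfAlg (genSets A) b ∧ nrmS b = ⊤ := by
  obtain ⟨p₀, hp₀⟩ : (jointSupp A)ᶜ.Nonempty := by
    refine nonempty_compl.2 fun h => ?_
    exact (h ▸ nrmS_jointSupp_lt_top A).ne nrmS_univ
  have hp₀ : profile A p₀ = 0 := profile_eq_zero_iff.2 hp₀
  refine ⟨cell A p₀, ⟨isAtomOfAlg_cell p₀, nrmS_cell_eq_top_iff.2 hp₀⟩, ?_⟩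
  rintro b ⟨hb, htop⟩
  obtain ⟨q, hq⟩ := nonempty_iff_ne_empty.2 hb.2.1
  rw [hb.eq_cell hq] at htop ⊢
  ext r
  rw [mem_cell, mem_cell, nrmS_cell_eq_top_iff.1 htop, hp₀]

end Cells

theorem exists_perm_comp_eq_of_fiber_equiv {α I : Type*} [Countable α] [Zero I]
    {f g : α → I} {M E : Set α} (hfM : ∀ p, f p ≠ 0 → p ∈ M) (hgM : ∀ p, g p ≠ 0 → p ∈ M)
    (hEM : E ⊆ M) (hE : E.Infinite) (hfE : ∀ p ∈ E, f p = 0) (hgE : ∀ p ∈ E, g p = 0)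
    (hfib : ∀ t ≠ 0, Nonempty ({p | f p = t} ≃ {p | g p = t})) :
    ∃ e : Equiv.Perm α, (∀ p ∉ M, e p = p) ∧ ∀ p, g (e p) = f p := by
  classical
  have hfib' : ∀ t, Nonempty ({m : M // f m = t} ≃ {m : M // g m = t}) := by
    intro t
    by_cases ht : t = 0
    · subst ht
      have : Infinite E := hE.to_subtype
      have : Infinite {m : M // f m = 0} := .of_injective (fun p : E => ⟨⟨p, hEM p.2⟩, hfE p p.2⟩)
        fun p q h => Subtype.ext (congrArg (fun m => m.1.1) h)
      have : Infinite {m : M // g m = 0} := .of_injective (fun p : E => ⟨⟨p, hEM p.2⟩, hgE p p.2⟩)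
        fun p q h => Subtype.ext (congrArg (fun m => m.1.1) h)
      exact nonempty_equiv_of_countable
    · obtain ⟨e⟩ := hfib t ht
      exact ⟨(Equiv.subtypeSubtypeEquivSubtype fun h => hfM _ (h ▸ ht)).trans <|
        e.trans (Equiv.subtypeSubtypeEquivSubtype fun h => hgM _ (h ▸ ht)).symm⟩
  refine ⟨Equiv.Perm.ofSubtype (Equiv.ofFiberEquiv fun t => (hfib' t).some),
    fun p hp => Equiv.Perm.ofSubtype_apply_of_not_mem _ hp, fun p => ?_⟩
  by_cases hp : p ∈ M
  · rw [Equiv.Perm.ofSubtype_apply_of_mem _ hp]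
    exact Equiv.ofFiberEquiv_map (f := fun m : M => f m) (g := fun m : M => g m) _ ⟨p, hp⟩
  · rw [Equiv.Perm.ofSubtype_apply_of_not_mem _ hp, not_not.1 (mt (hfM p) hp),
      not_not.1 (mt (hgM p) hp)]

lemma actGH_eq_iff {g : ↥Ggrp} {h h' : ↥Hgrp} :
    actGH g h = h' ↔ ∀ p, (h' : (ℕ × ℕ) → ZMod 2) ((g : Equiv.Perm (ℕ × ℕ)) p) =
      (h : (ℕ × ℕ) → ZMod 2) p := by
  rw [Subtype.ext_iff, funext_iff, ← (g : Equiv.Perm (ℕ × ℕ)).forall_congr_right]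
  simp [actGH, eq_comm]

lemma mem_Ggrp_of_apply_eq_of_notMem {g : Equiv.Perm (ℕ × ℕ)} {M : Set (ℕ × ℕ)} (hM : nrmS M < ⊤)
    (hg : ∀ p ∉ M, g p = p) : g ∈ Ggrp :=
  (nrmS_mono fun p hp => not_not.1 fun h => absurd (hg p h) hp).trans_lt hM

section Transitivity

variable {A : Finset ↥Hgrp} {x y : ↥Hgrp}

lemma nonempty_equiv_fiber_of_cell
    (hxy : ∀ p ε, Nonempty (({q | (x : (ℕ × ℕ) → ZMod 2) q = ε} ∩ cell A p : Set (ℕ × ℕ)) ≃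
      ({q | (y : (ℕ × ℕ) → ZMod 2) q = ε} ∩ cell A p : Set (ℕ × ℕ))))
    (t : ZMod 2 × (A → ZMod 2)) :
    Nonempty ({p | ((x : (ℕ × ℕ) → ZMod 2) p, profile A p) = t} ≃
      {p | ((y : (ℕ × ℕ) → ZMod 2) p, profile A p) = t}) := by
  obtain ⟨ε, η⟩ := t
  by_cases hη : η ∈ range (profile A)
  · obtain ⟨p, rfl⟩ := hη
    have hfib : ∀ z : ℕ × ℕ → ZMod 2,
        {q | (z q, profile A q) = (ε, profile A p)} = {q | z q = ε} ∩ cell A p := fun z => by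
      ext q; simp [mem_cell]
    rw [hfib, hfib]
    exact hxy p ε
  · have hfib : ∀ z : ℕ × ℕ → ZMod 2, {q | (z q, profile A q) = (ε, η)} = ∅ := fun z =>
      eq_empty_of_forall_notMem fun q hq => hη ⟨q, (Prod.ext_iff.1 hq).2⟩
    rw [hfib, hfib]
    exact ⟨Equiv.refl _⟩

theorem exists_fixing_actGH_eq_of_cell
    (hxy : ∀ p ε, Nonempty (({q | (x : (ℕ × ℕ) → ZMod 2) q = ε} ∩ cell A p : Set (ℕ × ℕ)) ≃
      ({q | (y : (ℕ × ℕ) → ZMod 2) q = ε} ∩ cell A p : Set (ℕ × ℕ)))) :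
    ∃ g : ↥Ggrp, (∀ a ∈ A, actGH g a = a) ∧ actGH g x = y := by
  set D := suppZ x ∪ suppZ y ∪ jointSupp A
  have hD : nrmS D < ⊤ := nrmS_union_lt_top (nrmS_union_lt_top x.2 y.2) (nrmS_jointSupp_lt_top A)
  obtain ⟨E, hE, hEnrm, hDE⟩ := exists_infinite_disjoint_nrmS_lt_top hD
  have hoff : ∀ p ∉ D, ((x : (ℕ × ℕ) → ZMod 2) p, profile A p) = 0 ∧
      ((y : (ℕ × ℕ) → ZMod 2) p, profile A p) = 0 := fun p hp => by
    simp only [D, mem_union, not_or, notMem_suppZ, ← profile_eq_zero_iff] at hp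
    simp [hp]
  obtain ⟨e, he_fix, he⟩ := exists_perm_comp_eq_of_fiber_equiv (M := D ∪ E)
    (fun p hp => subset_union_left (not_not.1 fun h => hp (hoff p h).1))
    (fun p hp => subset_union_left (not_not.1 fun h => hp (hoff p h).2)) subset_union_right hE
    (fun p hp => (hoff p (disjoint_right.1 hDE hp)).1)
    (fun p hp => (hoff p (disjoint_right.1 hDE hp)).2)
    (fun t _ => nonempty_equiv_fiber_of_cell hxy t)
  refine ⟨⟨e, mem_Ggrp_of_apply_eq_of_notMem (nrmS_union_lt_top hD hEnrm) he_fix⟩,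
    fun a ha => actGH_eq_iff.2 fun p => ?_, actGH_eq_iff.2 fun p => (Prod.ext_iff.1 (he p)).1⟩
  exact congrFun (Prod.ext_iff.1 (he p)).2 ⟨a, ha⟩

end Transitivity

/-- Let `A ⊆ H` be finite and let `B` be the Boolean algebra of subsets
of `ℕ × ℕ` generated by the sets `a⁻¹(0)`, `a⁻¹(1)` for `a ∈ A`. Then exactly one atom `b` of
`B` satisfies `‖b‖ = ∞`, and for all `x, y ∈ H`: if for every atom `b` of `B` and every
`ε ∈ {0,1}` the sets `x⁻¹(ε) ∩ b` and `y⁻¹(ε) ∩ b` have the same cardinality, then there is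
`g ∈ G` fixing every element of `A` with `g • x = y`. -/
theorem statement16 (A : Finset ↥Hgrp) :
    (∃! b : Set (ℕ × ℕ), IsAtomOfAlg (genSets A) b ∧ nrmS b = ⊤) ∧
    (∀ x y : ↥Hgrp,
      (∀ b : Set (ℕ × ℕ), IsAtomOfAlg (genSets A) b → ∀ ε : ZMod 2,
        Nonempty (({p : ℕ × ℕ | (x : (ℕ × ℕ) → ZMod 2) p = ε} ∩ b : Set (ℕ × ℕ)) ≃
                  ({p : ℕ × ℕ | (y : (ℕ × ℕ) → ZMod 2) p = ε} ∩ b : Set (ℕ × ℕ)))) →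
      ∃ g : ↥Ggrp, (∀ a ∈ A, actGH g a = a) ∧ actGH g x = y) :=
  ⟨existsUnique_isAtomOfAlg_nrmS_eq_top A, fun _ _ hxy =>
    exists_fixing_actGH_eq_of_cell fun p ε => hxy _ (isAtomOfAlg_cell p) ε⟩
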